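/- Let L(q,p) = ((16C₁p² + 8C₁ f(q) p + 2cC₁q² + 4cC₂q + C₁f(q)² + 8C₁C₃)² ) / (256 C₁²) - c₀/c on T*ℝ with canonical bracket, where C₁ ≠ 0, c ≠ 0 and f is smooth. Then G(q) = C₁q + C₂ satisfies X_L²(G) = -2(cL + c₀)G, where X_L(g) = {g, L} = ∂_p L ∂_q g - ∂_q L ∂_p g. -/

import Mathlib

/-- Canonical Hamiltonian vector field on T*ℝ with coordinates (q,p):
X_L g = ∂_p L ∂_q g − ∂_q L ∂_p g. -/
noncomputable def XLop (L g : ℝ × ℝ → ℝ) (x : ℝ × ℝ) : ℝ :=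
  fderiv ℝ L x (0, 1) * fderiv ℝ g x (1, 0) -
    fderiv ℝ L x (1, 0) * fderiv ℝ g x (0, 1)

private noncomputable def pdm (a b : ℝ) : ℝ × ℝ →L[ℝ] ℝ :=
  a • ContinuousLinearMap.fst ℝ ℝ ℝ + b • ContinuousLinearMap.snd ℝ ℝ ℝ

private lemma pdm_apply (a b : ℝ) (v : ℝ × ℝ) : pdm a b v = a * v.1 + b * v.2 := by
  simp [pdm]

private lemma hasFDerivAt_fst' (x : ℝ × ℝ) :
    HasFDerivAt (fun y : ℝ × ℝ => y.1) (pdm 1 0) x := by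
  refine (hasFDerivAt_fst (p := x)).congr_fderiv ?_
  apply ContinuousLinearMap.ext; intro v; simp [pdm]

private lemma hasFDerivAt_snd' (x : ℝ × ℝ) :
    HasFDerivAt (fun y : ℝ × ℝ => y.2) (pdm 0 1) x := by
  refine (hasFDerivAt_snd (p := x)).congr_fderiv ?_
  apply ContinuousLinearMap.ext; intro v; simp [pdm]

private lemma hasFDeriv_poly {f fd : ℝ → ℝ} (hfd : ∀ q, HasDerivAt f (fd q) q)
    (C₁ c C₂ C₃ : ℝ) (x : ℝ × ℝ) :
    HasFDerivAt (fun y : ℝ × ℝ => 16 * C₁ * y.2 ^ 2 + 8 * C₁ * f y.1 * y.2 +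
        2 * c * C₁ * y.1 ^ 2 + 4 * c * C₂ * y.1 + C₁ * (f y.1) ^ 2 + 8 * C₁ * C₃)
      (pdm (8 * C₁ * fd x.1 * x.2 + 4 * c * C₁ * x.1 + 4 * c * C₂ + 2 * C₁ * f x.1 * fd x.1)
        (32 * C₁ * x.2 + 8 * C₁ * f x.1)) x := by
  have hfq : HasFDerivAt (fun y : ℝ × ℝ => f y.1) (fd x.1 • pdm 1 0) x :=
    (hfd x.1).comp_hasFDerivAt x (hasFDerivAt_fst' x)
  have hsq : HasFDerivAt (fun y : ℝ × ℝ => y.2 ^ 2) ((2 * x.2 ^ 1) • pdm 0 1) x :=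
    (hasDerivAt_pow 2 x.2).comp_hasFDerivAt x (hasFDerivAt_snd' x)
  have hq2 : HasFDerivAt (fun y : ℝ × ℝ => y.1 ^ 2) ((2 * x.1 ^ 1) • pdm 1 0) x :=
    (hasDerivAt_pow 2 x.1).comp_hasFDerivAt x (hasFDerivAt_fst' x)
  have hf2 : HasFDerivAt (fun y : ℝ × ℝ => (f y.1) ^ 2)
      ((2 * f x.1 ^ 1) • (fd x.1 • pdm 1 0)) x :=
    ((hasDerivAt_pow 2 (f x.1)).comp_hasFDerivAt x hfq :
      HasFDerivAt ((fun t : ℝ => t ^ 2) ∘ fun y : ℝ × ℝ => f y.1) _ x)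
  have h := (((((hsq.const_mul (16 * C₁)).add
      ((hfq.const_mul (8 * C₁)).mul (hasFDerivAt_snd' x))).add
      (hq2.const_mul (2 * c * C₁))).add
      ((hasFDerivAt_fst' x).const_mul (4 * c * C₂))).add
      (hf2.const_mul C₁)).add_const (8 * C₁ * C₃)
  refine h.congr_fderiv ?_
  apply ContinuousLinearMap.ext; intro v
  simp [pdm]
  ring

private lemma hasFDeriv_sq {F : ℝ × ℝ → ℝ} {a b : ℝ} {x : ℝ × ℝ}
    (hF : HasFDerivAt F (pdm a b) x) (K c' : ℝ) :
    HasFDerivAt (fun y => (F y) ^ 2 / K - c')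
      (pdm (2 * F x * a / K) (2 * F x * b / K)) x := by
  have h0 : HasDerivAt (fun t : ℝ => t ^ 2 / K - c') (2 * F x ^ 1 / K) (F x) :=
    ((hasDerivAt_pow 2 (F x)).div_const K).sub_const c'
  refine (h0.comp_hasFDerivAt x hF).congr_fderiv ?_
  apply ContinuousLinearMap.ext; intro v
  simp [pdm]
  ring

private lemma hasFDeriv_mul_div {F G : ℝ × ℝ → ℝ} {a b a' b' : ℝ} {x : ℝ × ℝ}
    (hF : HasFDerivAt F (pdm a b) x) (hG : HasFDerivAt G (pdm a' b') x) (K : ℝ) :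
    HasFDerivAt (fun y => F y * G y / K)
      (pdm ((F x * a' + G x * a) / K) ((F x * b' + G x * b) / K)) x := by
  have h0 : HasDerivAt (fun t : ℝ => t / K) (1 / K) (F x * G x) := by
    simpa using (hasDerivAt_id (F x * G x)).div_const K
  refine (h0.comp_hasFDerivAt x (hF.mul hG)).congr_fderiv ?_
  apply ContinuousLinearMap.ext; intro v
  simp [pdm]
  ring

private def Pf (C₁ c C₂ C₃ : ℝ) (f : ℝ → ℝ) (y : ℝ × ℝ) : ℝ :=
  16 * C₁ * y.2 ^ 2 + 8 * C₁ * f y.1 * y.2 + 2 * c * C₁ * y.1 ^ 2 +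
    4 * c * C₂ * y.1 + C₁ * (f y.1) ^ 2 + 8 * C₁ * C₃

private def Pqf (C₁ c C₂ : ℝ) (f fd : ℝ → ℝ) (y : ℝ × ℝ) : ℝ :=
  8 * C₁ * fd y.1 * y.2 + 4 * c * C₁ * y.1 + 4 * c * C₂ + 2 * C₁ * f y.1 * fd y.1

private def Ppf (C₁ : ℝ) (f : ℝ → ℝ) (y : ℝ × ℝ) : ℝ :=
  32 * C₁ * y.2 + 8 * C₁ * f y.1

theorem stmt11 (c c₀ C₁ C₂ C₃ : ℝ) (hC₁ : C₁ ≠ 0) (hc : c ≠ 0)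
    (f : ℝ → ℝ) (hf : ContDiff ℝ (⊤ : ℕ∞) f)
    (L : ℝ × ℝ → ℝ)
    (hL : ∀ x : ℝ × ℝ, L x =
      (16 * C₁ * x.2 ^ 2 + 8 * C₁ * f x.1 * x.2 + 2 * c * C₁ * x.1 ^ 2 +
        4 * c * C₂ * x.1 + C₁ * (f x.1) ^ 2 + 8 * C₁ * C₃) ^ 2 / (256 * C₁ ^ 2)
      - c₀ / c)
    (G : ℝ × ℝ → ℝ) (hG : ∀ x : ℝ × ℝ, G x = C₁ * x.1 + C₂) :
    ∀ x : ℝ × ℝ, XLop L (XLop L G) x = -2 * (c * L x + c₀) * G x := by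
  have hLfun : L = fun x : ℝ × ℝ =>
      (16 * C₁ * x.2 ^ 2 + 8 * C₁ * f x.1 * x.2 + 2 * c * C₁ * x.1 ^ 2 +
        4 * c * C₂ * x.1 + C₁ * (f x.1) ^ 2 + 8 * C₁ * C₃) ^ 2 / (256 * C₁ ^ 2)
      - c₀ / c := funext hL
  have hGfun : G = fun x : ℝ × ℝ => C₁ * x.1 + C₂ := funext hG
  subst hLfun hGfun
  set fd : ℝ → ℝ := deriv f with hfddef
  have hfd : ∀ q, HasDerivAt f (fd q) q := fun q =>
    ((hf.differentiable (by simp)) q).hasDerivAt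
  have hPd : ∀ x : ℝ × ℝ, HasFDerivAt (Pf C₁ c C₂ C₃ f)
      (pdm (Pqf C₁ c C₂ f fd x) (Ppf C₁ f x)) x := fun x =>
    hasFDeriv_poly hfd C₁ c C₂ C₃ x
  have hLd : ∀ x : ℝ × ℝ, HasFDerivAt (fun y : ℝ × ℝ =>
      (16 * C₁ * y.2 ^ 2 + 8 * C₁ * f y.1 * y.2 + 2 * c * C₁ * y.1 ^ 2 +
        4 * c * C₂ * y.1 + C₁ * (f y.1) ^ 2 + 8 * C₁ * C₃) ^ 2 / (256 * C₁ ^ 2)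
      - c₀ / c)
      (pdm (2 * Pf C₁ c C₂ C₃ f x * Pqf C₁ c C₂ f fd x / (256 * C₁ ^ 2))
        (2 * Pf C₁ c C₂ C₃ f x * Ppf C₁ f x / (256 * C₁ ^ 2))) x := fun x =>
    hasFDeriv_sq (hPd x) (256 * C₁ ^ 2) (c₀ / c)
  have hGd : ∀ x : ℝ × ℝ, HasFDerivAt (fun y : ℝ × ℝ => C₁ * y.1 + C₂)
      (pdm C₁ 0) x := by
    intro x
    refine (((hasFDerivAt_fst' x).const_mul C₁).add_const C₂).congr_fderiv ?_
    apply ContinuousLinearMap.ext; intro v; simp [pdm]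
  have hPpd : ∀ x : ℝ × ℝ, HasFDerivAt (Ppf C₁ f)
      (pdm (8 * C₁ * fd x.1) (32 * C₁)) x := by
    intro x
    have hfq : HasFDerivAt (fun y : ℝ × ℝ => f y.1) (fd x.1 • pdm 1 0) x :=
      (hfd x.1).comp_hasFDerivAt x (hasFDerivAt_fst' x)
    refine (((hasFDerivAt_snd' x).const_mul (32 * C₁)).add
      (hfq.const_mul (8 * C₁))).congr_fderiv ?_
    apply ContinuousLinearMap.ext; intro v; simp [pdm]; ring
  have hXG : XLop (fun y : ℝ × ℝ =>
      (16 * C₁ * y.2 ^ 2 + 8 * C₁ * f y.1 * y.2 + 2 * c * C₁ * y.1 ^ 2 +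
        4 * c * C₂ * y.1 + C₁ * (f y.1) ^ 2 + 8 * C₁ * C₃) ^ 2 / (256 * C₁ ^ 2)
      - c₀ / c) (fun y : ℝ × ℝ => C₁ * y.1 + C₂)
      = fun y => Pf C₁ c C₂ C₃ f y * Ppf C₁ f y / (128 * C₁) := by
    funext z
    unfold XLop
    rw [(hLd z).fderiv, (hGd z).fderiv]
    simp [pdm_apply]
    field_simp
    ring
  intro x
  rw [hXG]
  unfold XLop
  rw [(hLd x).fderiv]
  rw [(hasFDeriv_mul_div (hPd x) (hPpd x) (128 * C₁)).fderiv]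
  simp only [pdm_apply]
  simp only [Pf, Pqf, Ppf]
  field_simp
  ring
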